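/- For every continuous function f : Ω → ℝ, if ‖[D, π(M_f)]‖ ≤ 1 then both ‖Kf − f‖_{L²(μ)} ≤ 1 and ‖Lf − f‖_{L²(μ)} ≤ 1. -/

import Mathlib

open MeasureTheory ContinuousLinearMap
open scoped RealInnerProductSpace InnerProductSpace ENNReal

noncomputable section

/-- The shift space `Ω = {0,1}^ℕ`, with `false` playing the role of the symbol `0`
and `true` of the symbol `1`. -/
abbrev Ω : Type := ℕ → Bool

/-- The shift map `σ`, `σ(x)ₙ = x_{n+1}`. -/
def shiftMap : Ω → Ω := fun x n => x (n + 1)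

/-- Prepending a symbol: `consSeq a x = ax`. -/
def consSeq (a : Bool) (x : Ω) : Ω := fun n => Nat.casesOn n a (fun k => x k)

/-- The cylinder set `[w]` of sequences beginning with the finite word `w`. -/
def cylinder (w : List Bool) : Set Ω := {x | ∀ i : Fin w.length, x (i : ℕ) = w.get i}

/-- The Hilbert space `L²(μ)` (real). -/
abbrev E (μ : Measure Ω) := Lp (α := Ω) ℝ 2 μ

/-- The Hilbert space `H = L²(μ) × L²(μ)` with the norm `√(‖φ‖² + ‖ψ‖²)`. -/
abbrev HS (μ : Measure Ω) := WithLp 2 (E μ × E μ)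

variable {μ : Measure Ω}

/-- The diagonal block operator `(φ, ψ) ↦ (A₁φ, A₂ψ)` on `H`. -/
def blockDiag (A₁ A₂ : E μ →L[ℝ] E μ) : HS μ →L[ℝ] HS μ :=
  ((WithLp.prodContinuousLinearEquiv 2 ℝ (E μ) (E μ)).symm.toContinuousLinearMap).comp
    (((A₁.comp (ContinuousLinearMap.fst ℝ (E μ) (E μ))).prod
        (A₂.comp (ContinuousLinearMap.snd ℝ (E μ) (E μ)))).comp
      (WithLp.prodContinuousLinearEquiv 2 ℝ (E μ) (E μ)).toContinuousLinearMap)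

/-- The antidiagonal block operator `(φ, ψ) ↦ (A₁ψ, A₂φ)` on `H`. -/
def blockAntidiag (A₁ A₂ : E μ →L[ℝ] E μ) : HS μ →L[ℝ] HS μ :=
  ((WithLp.prodContinuousLinearEquiv 2 ℝ (E μ) (E μ)).symm.toContinuousLinearMap).comp
    (((A₁.comp (ContinuousLinearMap.snd ℝ (E μ) (E μ))).prod
        (A₂.comp (ContinuousLinearMap.fst ℝ (E μ) (E μ)))).comp
      (WithLp.prodContinuousLinearEquiv 2 ℝ (E μ) (E μ)).toContinuousLinearMap)

/-- The diagonal representation `π(A)(φ,ψ) = (Aφ, Aψ)`. -/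
def diagRep (A : E μ →L[ℝ] E μ) : HS μ →L[ℝ] HS μ := blockDiag A A

/-- The Dirac operator `D(φ,ψ) = (Kψ, Lφ)` associated with the pair `(K, L)`. -/
def dirac (K L : E μ →L[ℝ] E μ) : HS μ →L[ℝ] HS μ := blockAntidiag K L

/-- The commutator `[D, π(A)]`. -/
def commD (K L A : E μ →L[ℝ] E μ) : HS μ →L[ℝ] HS μ :=
  (dirac K L).comp (diagRep A) - (diagRep A).comp (dirac K L)

/-- The rank-one orthogonal projection onto the span of the unit vector `ψ`:
`φ ↦ ⟪ψ, φ⟫ • ψ`. -/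
def rankOneProj (ψ : E μ) : E μ →L[ℝ] E μ := (innerSL ℝ ψ).smulRight ψ

/-- The Haar-basis element `e_w = 2^{ℓ(w)/2} (χ_{[w1]} - χ_{[w0]})`, as a function on `Ω`. -/
def haarFun (w : List Bool) : Ω → ℝ := fun x =>
  (2 : ℝ) ^ ((w.length : ℝ) / 2) *
    ((cylinder (w ++ [true])).indicator 1 x - (cylinder (w ++ [false])).indicator 1 x)

lemma continuous_shiftMap : Continuous shiftMap :=
  continuous_pi fun n => continuous_apply (n + 1)

lemma continuous_consSeq (a : Bool) : Continuous (consSeq a) := by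
  apply continuous_pi
  intro n
  cases n with
  | zero => exact continuous_const
  | succ k => exact continuous_apply k

/-- The Koopman operator on continuous functions: `f ↦ f ∘ σ`. -/
def koopmanC (f : C(Ω, ℝ)) : C(Ω, ℝ) := f.comp ⟨shiftMap, continuous_shiftMap⟩

/-- The Ruelle operator on continuous functions: `(Lf)(x) = (f(0x) + f(1x))/2`. -/
def ruelleC (f : C(Ω, ℝ)) : C(Ω, ℝ) :=
  ⟨fun x => (f (consSeq false x) + f (consSeq true x)) / 2,
    ((f.continuous.comp (continuous_consSeq false)).add
      (f.continuous.comp (continuous_consSeq true))).div_const 2⟩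

end

/-! Evaluate the commutator on `(0, 1)` and `(1, 0)`, where `1` is the constant function:
`[D, π(M_f)](φ, ψ) = (K(fψ) - f Kψ, L(fφ) - f Lφ)`, so `K 1 = 1` and `L 1 = 1` turn these into
`(Kf - f, 0)` and `(0, Lf - f)`, both of norm at most `‖[D, π(M_f)]‖`. The identity `L 1 = 1`
comes from `L = K†`: `⟪L 1, g⟫ = ∫ g ∘ σ = ∫ g`, because the measure is shift-invariant, which is
checked on the π-system of cylinders. -/

lemma mem_cylinder_iff {x : Ω} {w : List Bool} :
    x ∈ cylinder w ↔ ∀ i : Fin w.length, x i = w.get i :=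
  Iff.rfl

lemma cylinder_nil : cylinder [] = Set.univ := by
  ext x
  simp [mem_cylinder_iff]

lemma mem_cylinder_cons {x : Ω} {b : Bool} {w : List Bool} :
    x ∈ cylinder (b :: w) ↔ x 0 = b ∧ shiftMap x ∈ cylinder w := by
  refine ⟨fun hx => ⟨hx ⟨0, w.length.succ_pos⟩, fun i => hx i.succ⟩, ?_⟩
  rintro ⟨h0, hs⟩ i
  cases i using Fin.cases with
  | zero => exact h0
  | succ i => exact hs i

lemma mem_cylinder_append_singleton {x : Ω} {w : List Bool} {b : Bool} :
    x ∈ cylinder (w ++ [b]) ↔ x ∈ cylinder w ∧ x w.length = b := by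
  induction w generalizing x with
  | nil => simp [mem_cylinder_cons, cylinder_nil]
  | cons c w ih => simp [mem_cylinder_cons, ih, and_assoc, shiftMap]

lemma measurableSet_cylinder (w : List Bool) : MeasurableSet (cylinder w) := by
  have : cylinder w = ⋂ i : Fin w.length, (fun x : Ω => x i) ⁻¹' {w.get i} := by
    ext x
    simp [mem_cylinder_iff]
  rw [this]
  exact .iInter fun i => measurable_pi_apply _ (measurableSet_singleton _)

lemma cylinder_subset_of_length_le {w v : List Bool} (hne : (cylinder w ∩ cylinder v).Nonempty)
    (hwv : w.length ≤ v.length) : cylinder v ⊆ cylinder w := by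
  obtain ⟨y, hyw, hyv⟩ := hne
  intro z hz i
  have hi : (i : ℕ) < v.length := i.2.trans_le hwv
  rw [← hyw i, hz ⟨i, hi⟩, hyv ⟨i, hi⟩]

lemma isPiSystem_range_cylinder : IsPiSystem (Set.range cylinder) := by
  rintro _ ⟨w, rfl⟩ _ ⟨v, rfl⟩ hne
  rcases le_total w.length v.length with hwv | hvw
  · exact ⟨v, (Set.inter_eq_self_of_subset_right (cylinder_subset_of_length_le hne hwv)).symm⟩
  · rw [Set.inter_comm] at hne ⊢
    exact ⟨w, (Set.inter_eq_self_of_subset_right (cylinder_subset_of_length_le hne hvw)).symm⟩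

lemma setOf_apply_eq_iUnion_cylinder (n : ℕ) (b : Bool) :
    {x : Ω | x n = b} = ⋃ v : Fin n → Bool, cylinder (List.ofFn v ++ [b]) := by
  ext x
  simp only [Set.mem_ofPred_eq, Set.mem_iUnion, mem_cylinder_append_singleton, List.length_ofFn]
  refine ⟨fun hx => ⟨fun i => x i, fun i => by simp, hx⟩, fun ⟨_, _, hx⟩ => hx⟩

lemma generateFrom_range_cylinder :
    MeasurableSpace.generateFrom (Set.range cylinder) = (inferInstance : MeasurableSpace Ω) := by
  refine le_antisymm (MeasurableSpace.generateFrom_le ?_) (iSup_le fun n => ?_)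
  · rintro _ ⟨w, rfl⟩
    exact measurableSet_cylinder w
  · refine Measurable.comap_le
      (@measurable_to_countable' _ _ _ _ (.generateFrom (Set.range cylinder)) _ fun b => ?_)
    simp_rw [Set.preimage, Set.mem_singleton_iff, setOf_apply_eq_iUnion_cylinder]
    exact .iUnion fun v => MeasurableSpace.measurableSet_generateFrom ⟨_, rfl⟩

lemma measurable_shiftMap : Measurable shiftMap :=
  measurable_pi_iff.mpr fun n => measurable_pi_apply (n + 1)

lemma shiftMap_preimage_cylinder (w : List Bool) :
    shiftMap ⁻¹' cylinder w = cylinder (false :: w) ∪ cylinder (true :: w) := by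
  ext x
  cases hx : x 0 <;> simp [mem_cylinder_cons, hx]

lemma disjoint_cylinder_cons (w : List Bool) :
    Disjoint (cylinder (false :: w)) (cylinder (true :: w)) :=
  Set.disjoint_left.mpr fun _ hf ht =>
    Bool.false_ne_true ((mem_cylinder_cons.mp hf).1.symm.trans (mem_cylinder_cons.mp ht).1)

lemma measurePreserving_shiftMap (μ : Measure Ω) [IsFiniteMeasure μ]
    (hμ : ∀ w : List Bool, μ (cylinder w) = (1 / 2) ^ w.length) :
    MeasurePreserving shiftMap μ μ := by
  refine ⟨measurable_shiftMap, ext_of_generate_finite _ generateFrom_range_cylinder.symm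
    isPiSystem_range_cylinder ?_ ?_⟩
  · rintro _ ⟨w, rfl⟩
    rw [Measure.map_apply measurable_shiftMap (measurableSet_cylinder w),
      shiftMap_preimage_cylinder,
      measure_union (disjoint_cylinder_cons w) (measurableSet_cylinder _), hμ, hμ, hμ,
      List.length_cons, List.length_cons, pow_succ, ← mul_add, ENNReal.add_halves, mul_one]
  · rw [Measure.map_apply measurable_shiftMap .univ, Set.preimage_univ]

section Koopman

variable {α : Type*} [MeasurableSpace α] {ν : Measure α} {T : α → α}
  {K : Lp ℝ 2 ν →L[ℝ] Lp ℝ 2 ν}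

lemma integral_koopman (hT : MeasurePreserving T ν ν)
    (hK : ∀ g : Lp ℝ 2 ν, (K g : α → ℝ) =ᵐ[ν] fun x => g (T x)) (g : Lp ℝ 2 ν) :
    ∫ x, K g x ∂ν = ∫ x, g x ∂ν := by
  have hg : AEStronglyMeasurable g (ν.map T) := hT.map_eq.symm ▸ Lp.aestronglyMeasurable g
  rw [integral_congr_ae (hK g), ← integral_map hT.aemeasurable hg, hT.map_eq]

variable [IsFiniteMeasure ν]

lemma inner_Lp_const_left (c : ℝ) (g : Lp ℝ 2 ν) :
    ⟪Lp.const 2 ν c, g⟫ = c * ∫ x, g x ∂ν := by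
  rw [L2.inner_def, ← integral_const_mul]
  refine integral_congr_ae ?_
  filter_upwards [Lp.coeFn_const 2 ν c] with x hx
  rw [hx, Function.const_apply, Real.inner_apply]

lemma koopman_apply_const (hT : Measure.QuasiMeasurePreserving T ν ν)
    (hK : ∀ g : Lp ℝ 2 ν, (K g : α → ℝ) =ᵐ[ν] fun x => g (T x)) (c : ℝ) :
    K (Lp.const 2 ν c) = Lp.const 2 ν c :=
  Lp.ext <| (hK _).trans <|
    (hT.ae_eq_comp (Lp.coeFn_const 2 ν c)).trans (Lp.coeFn_const 2 ν c).symm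

lemma adjoint_koopman_apply_const (hT : MeasurePreserving T ν ν)
    (hK : ∀ g : Lp ℝ 2 ν, (K g : α → ℝ) =ᵐ[ν] fun x => g (T x)) (c : ℝ) :
    adjoint K (Lp.const 2 ν c) = Lp.const 2 ν c :=
  ext_inner_right ℝ fun g => by
    rw [adjoint_inner_left, inner_Lp_const_left, inner_Lp_const_left, integral_koopman hT hK]

lemma multiplication_apply_const_one {f : α → ℝ} {M : Lp ℝ 2 ν →L[ℝ] Lp ℝ 2 ν}
    (hM : ∀ g : Lp ℝ 2 ν, (M g : α → ℝ) =ᵐ[ν] fun x => f x * g x)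
    {fL : Lp ℝ 2 ν} (hfL : (fL : α → ℝ) =ᵐ[ν] f) :
    M (Lp.const 2 ν 1) = fL :=
  Lp.ext <| (hM _).trans <| by
    filter_upwards [Lp.coeFn_const 2 ν (1 : ℝ), hfL] with x hx hfx
    rw [hx, hfx, Function.const_apply, mul_one]

end Koopman

section Commutator

variable {μ : Measure Ω}

lemma commD_toLp (K L A : E μ →L[ℝ] E μ) (φ ψ : E μ) :
    commD K L A (WithLp.toLp 2 (φ, ψ)) =
      WithLp.toLp 2 (K (A ψ) - A (K ψ), L (A φ) - A (L φ)) :=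
  rfl

lemma norm_commutator_fst_le (K L A : E μ →L[ℝ] E μ) (ψ : E μ) :
    ‖K (A ψ) - A (K ψ)‖ ≤ ‖commD K L A‖ * ‖ψ‖ := by
  simpa [commD_toLp] using (commD K L A).le_opNorm (WithLp.toLp 2 (0, ψ))

lemma norm_commutator_snd_le (K L A : E μ →L[ℝ] E μ) (φ : E μ) :
    ‖L (A φ) - A (L φ)‖ ≤ ‖commD K L A‖ * ‖φ‖ := by
  simpa [commD_toLp] using (commD K L A).le_opNorm (WithLp.toLp 2 (φ, 0))

end Commutator

theorem stmt18_general
    (μ : Measure Ω) [IsProbabilityMeasure μ]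
    (hμ : ∀ w : List Bool, μ (cylinder w) = (1 / 2) ^ w.length)
    (K L : E μ →L[ℝ] E μ)
    (hK : ∀ g : E μ, (K g : Ω → ℝ) =ᵐ[μ] fun x => g (shiftMap x))
    (hadj : ContinuousLinearMap.adjoint K = L)
    (f : C(Ω, ℝ)) (Mf : E μ →L[ℝ] E μ)
    (hMf : ∀ g : E μ, (Mf g : Ω → ℝ) =ᵐ[μ] fun x => f x * g x)
    (fL : E μ) (hfL : (fL : Ω → ℝ) =ᵐ[μ] f)
    (h : ‖commD K L Mf‖ ≤ 1) :
    ‖K fL - fL‖ ≤ 1 ∧ ‖L fL - fL‖ ≤ 1 := by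
  have hσ := measurePreserving_shiftMap μ hμ
  set one : E μ := Lp.const 2 μ 1
  have h_one : ‖one‖ = 1 := by simp [one, Lp.norm_const]
  have hK_one : K one = one := koopman_apply_const hσ.quasiMeasurePreserving hK 1
  have hL_one : L one = one := hadj ▸ adjoint_koopman_apply_const hσ hK 1
  have hMf_one : Mf one = fL := multiplication_apply_const_one hMf hfL
  constructor
  · calc ‖K fL - fL‖ = ‖K (Mf one) - Mf (K one)‖ := by rw [hK_one, hMf_one]
      _ ≤ ‖commD K L Mf‖ * ‖one‖ := norm_commutator_fst_le K L Mf one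
      _ ≤ 1 := by rwa [h_one, mul_one]
  · calc ‖L fL - fL‖ = ‖L (Mf one) - Mf (L one)‖ := by rw [hL_one, hMf_one]
      _ ≤ ‖commD K L Mf‖ * ‖one‖ := norm_commutator_snd_le K L Mf one
      _ ≤ 1 := by rwa [h_one, mul_one]

/-- If `‖[D, π(M_f)]‖ ≤ 1` then `‖Kf − f‖_{L²} ≤ 1` and `‖Lf − f‖_{L²} ≤ 1`. -/
theorem stmt18
    (μ : Measure Ω) [IsProbabilityMeasure μ]
    (hμ : ∀ w : List Bool, μ (cylinder w) = (1 / 2) ^ w.length)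
    (K L : E μ →L[ℝ] E μ)
    (hK : ∀ g : E μ, (K g : Ω → ℝ) =ᵐ[μ] fun x => g (shiftMap x))
    (hL : ∀ g : E μ, (L g : Ω → ℝ) =ᵐ[μ]
      fun x => (g (consSeq false x) + g (consSeq true x)) / 2)
    (hadj : ContinuousLinearMap.adjoint K = L)
    (f : C(Ω, ℝ)) (Mf : E μ →L[ℝ] E μ)
    (hMf : ∀ g : E μ, (Mf g : Ω → ℝ) =ᵐ[μ] fun x => f x * g x)
    (fL : E μ) (hfL : (fL : Ω → ℝ) =ᵐ[μ] f)
    (h : ‖commD K L Mf‖ ≤ 1) :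
    ‖K fL - fL‖ ≤ 1 ∧ ‖L fL - fL‖ ≤ 1 :=
  stmt18_general μ hμ K L hK hadj f Mf hMf fL hfL h
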